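/- For every n ≥ 2, the number of permutations π ∈ S_n that avoid the generalized pattern 23-1 and satisfy π_1 = 1 equals the Bell number B_{n-1}; and for every k with 2 ≤ k ≤ n, the number of permutations π ∈ S_n that avoid 23-1 and satisfy π_1 = k equals ∇^{n-k}(B_{n-1}) = Σ_{i=0}^{n-k} (-1)^i · C(n-k, i) · B_{n-1-i}. -/

import Mathlib

/-!
Encode a setoid on `Fin n` by the permutation listing its blocks in increasing order of their
minima, each block in decreasing order. These permutations are exactly the 23-1 avoiders: their
ascents occur only between blocks, where the left entry is a block minimum and hence smaller than
everything to its right; conversely, the block minimum of a value of an avoider is the minimum of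
the suffix starting at that value. Under this bijection `π 0` is the largest element of the block
of `0`. That block is `{0}` for `B_{n-1}` setoids, and the setoids in which its maximum is `κ > 0`
are counted by inclusion–exclusion over the points above `κ` that also join it, since forcing a set
`T` of points into the block of `0` leaves `B_{n - #T}` setoids.
-/

/-- `π` avoids the generalized pattern 23-1. -/
def Avoids23d1 {n : ℕ} (π : Equiv.Perm (Fin n)) : Prop :=
  ¬ ∃ (i j : Fin n) (h : i.1 + 1 < n), i.1 + 1 < j.1 ∧ π j < π i ∧ π i < π ⟨i.1 + 1, h⟩

/-- The `m`-th Bell number: the number of partitions of a set with `m` elements,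
equivalently the number of equivalence relations (setoids) on `Fin m`. -/
noncomputable def bell (m : ℕ) : ℕ := Nat.card (Setoid (Fin m))

open Finset

section SetoidCount

variable {α β : Type*}

def Equiv.setoidCongr (e : α ≃ β) : Setoid α ≃ Setoid β where
  toFun s := s.comap e.symm
  invFun t := t.comap e
  left_inv s := Setoid.ext fun a b => by simp [Setoid.comap_rel]
  right_inv t := Setoid.ext fun a b => by simp [Setoid.comap_rel]

instance Setoid.finite [Finite α] : Finite (Setoid α) :=
  Finite.of_injective (fun s : Setoid α => ⇑s) fun _ _ => Setoid.eq_iff_rel_eq.2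

theorem Nat.card_setoid [Finite α] : Nat.card (Setoid α) = bell (Nat.card α) :=
  Nat.card_congr (Equiv.setoidCongr (Finite.equivFin α))

theorem Setoid.rel_congr (s : Setoid α) {a a' b b' : α} (ha : s a a') (hb : s b b') :
    s a b ↔ s a' b' :=
  ⟨fun h => s.trans (s.symm ha) (s.trans h hb), fun h => s.trans ha (s.trans h (s.symm hb))⟩

open Classical in
noncomputable def Setoid.forallRelEquiv (P : α → Prop) (a : α) (ha : ¬ P a) :
    {s : Setoid α // ∀ x, P x → s a x} ≃ Setoid {x // ¬ P x} where
  toFun s := s.1.comap Subtype.val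
  invFun t := ⟨t.comap fun x => if h : P x then ⟨a, ha⟩ else ⟨x, h⟩,
    fun x hx => by simp [Setoid.comap_rel, hx, ha]⟩
  left_inv := by
    rintro ⟨s, hs⟩
    have hcollapse (x : α) : s (if h : P x then a else x) x := by
      split_ifs with h
      · exact hs x h
      · exact s.refl x
    ext x y
    simpa [Setoid.comap_rel, apply_dite Subtype.val] using s.rel_congr (hcollapse x) (hcollapse y)
  right_inv t := Setoid.ext fun x y => by simp [Setoid.comap_rel, x.2, y.2]

def Setoid.isolatedEquiv (a : α) :
    {s : Setoid α // ∀ x, s a x → x = a} ≃ Setoid {x // x ≠ a} where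
  toFun s := s.1.comap Subtype.val
  invFun t :=
    ⟨{ r := fun x y => (x = a ∧ y = a) ∨ ∃ (hx : x ≠ a) (hy : y ≠ a), t ⟨x, hx⟩ ⟨y, hy⟩
       iseqv := by
        refine ⟨fun x => ?_, ?_, ?_⟩
        · by_cases h : x = a
          · exact .inl ⟨h, h⟩
          · exact .inr ⟨h, h, t.refl _⟩
        · rintro x y (⟨hx, hy⟩ | ⟨hx, hy, h⟩)
          · exact .inl ⟨hy, hx⟩
          · exact .inr ⟨hy, hx, t.symm h⟩
        · rintro x y z (⟨hx, hy⟩ | ⟨hx, hy, h⟩) (⟨hy', hz⟩ | ⟨hy', hz, h'⟩)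
          · exact .inl ⟨hx, hz⟩
          · exact absurd hy hy'
          · exact absurd hy' hy
          · exact .inr ⟨hx, hz, t.trans h h'⟩ },
      by rintro x (⟨-, hx⟩ | ⟨ha, -⟩) <;> trivial⟩
  left_inv := by
    rintro ⟨s, hs⟩
    ext x y
    change (x = a ∧ y = a) ∨ (∃ (hx : x ≠ a) (hy : y ≠ a), s x y) ↔ s x y
    constructor
    · rintro (⟨rfl, rfl⟩ | ⟨-, -, h⟩)
      exacts [s.refl _, h]
    · intro h
      by_cases hx : x = a
      · subst hx; exact .inl ⟨rfl, hs y h⟩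
      · exact .inr ⟨hx, fun hy => hx (hs x (hy ▸ s.symm h)), h⟩
  right_inv t := by
    ext x y
    change (x.1 = a ∧ y.1 = a) ∨ (∃ (hx : x.1 ≠ a) (hy : y.1 ≠ a), t ⟨x, hx⟩ ⟨y, hy⟩) ↔ t x y
    simp [x.2, y.2]

theorem Setoid.card_forall_rel [Fintype α] {a : α} {T : Finset α} (ha : a ∉ T) :
    Nat.card {s : Setoid α // ∀ x ∈ T, s a x} = bell (Fintype.card α - #T) := by
  classical
  rw [Nat.card_congr (Setoid.forallRelEquiv (· ∈ T) a ha), Nat.card_setoid,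
    Nat.card_eq_fintype_card, Fintype.card_subtype_compl, Fintype.card_coe]

theorem Setoid.card_isolated [Fintype α] (a : α) :
    Nat.card {s : Setoid α // ∀ x, s a x → x = a} = bell (Fintype.card α - 1) := by
  classical
  rw [Nat.card_congr (Setoid.isolatedEquiv a), Nat.card_setoid, Nat.card_eq_fintype_card,
    Fintype.card_subtype_compl, Fintype.card_subtype_eq]

theorem Setoid.card_rel_forall_not_rel [Fintype α] {a b : α} (hab : a ≠ b) {U : Finset α}
    (ha : a ∉ U) (hb : b ∉ U) :
    (Nat.card {s : Setoid α // s a b ∧ ∀ x ∈ U, ¬ s a x} : ℤ) =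
      ∑ j ∈ range (#U + 1), (-1 : ℤ) ^ j * ((#U).choose j) * bell (Fintype.card α - 1 - j) := by
  classical
  have := Fintype.ofFinite (Setoid α)
  let S (x : α) : Finset {s : Setoid α // s a b} := {s | s.1 a x}
  have card_inf {t : Finset α} (ht : t ⊆ U) : #(t.inf S) = bell (Fintype.card α - 1 - #t) := by
    have hbt : b ∉ t := fun h => hb (ht h)
    have hat : a ∉ insert b t := by simpa [hab] using fun h => ha (ht h)
    rw [show Fintype.card α - 1 - #t = Fintype.card α - #(insert b t) by
      rw [card_insert_of_notMem hbt]; omega, ← Setoid.card_forall_rel hat, ← Nat.card_eq_finsetCard]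
    refine Nat.card_congr ((Equiv.subtypeEquivRight fun s => ?_).trans
      ((Equiv.subtypeSubtypeEquivSubtypeInter (fun s : Setoid α => s a b)
        (fun s => ∀ x ∈ t, s a x)).trans (Equiv.subtypeEquivRight fun s => ?_)))
    · simp [S, Finset.mem_inf]
    · simp
  calc (Nat.card {s : Setoid α // s a b ∧ ∀ x ∈ U, ¬ s a x} : ℤ)
      = #(U.inf fun x => (S x)ᶜ) := by
        rw [← Nat.card_eq_finsetCard]
        refine congrArg _ (Nat.card_congr ((Equiv.subtypeSubtypeEquivSubtypeInter _ _).symm.trans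
          (Equiv.subtypeEquivRight fun s => ?_)))
        simp [S, Finset.mem_inf]
    _ = ∑ t ∈ U.powerset, (-1) ^ #t * (bell (Fintype.card α - 1 - #t) : ℤ) := by
        rw [inclusion_exclusion_card_inf_compl]
        exact sum_congr rfl fun t ht => by rw [card_inf (mem_powerset.1 ht)]
    _ = _ := by
        rw [sum_powerset_apply_card (fun j => (-1 : ℤ) ^ j * (bell (Fintype.card α - 1 - j) : ℤ))]
        exact sum_congr rfl fun j _ => by rw [nsmul_eq_mul]; ring

end SetoidCount

namespace Setoid

variable {α : Type*} [LinearOrder α] [Fintype α] (s : Setoid α)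

open Classical in
noncomputable def blockMin (a : α) : α :=
  ({b | s a b} : Finset α).min' ⟨a, by simp⟩

open Classical in
theorem rel_blockMin (a : α) : s a (s.blockMin a) := by
  simpa [blockMin] using ({b | s a b} : Finset α).min'_mem ⟨a, by simp⟩

open Classical in
theorem blockMin_le_of_rel {a b : α} (h : s a b) : s.blockMin a ≤ b :=
  min'_le _ _ (by simpa using h)

theorem blockMin_le (a : α) : s.blockMin a ≤ a :=
  s.blockMin_le_of_rel (s.refl a)

theorem blockMin_eq_blockMin_iff {a b : α} : s.blockMin a = s.blockMin b ↔ s a b := by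
  refine ⟨fun h => s.trans (s.rel_blockMin a) (h ▸ s.symm (s.rel_blockMin b)), fun h => ?_⟩
  exact le_antisymm (s.blockMin_le_of_rel (s.trans h (s.rel_blockMin b)))
    (s.blockMin_le_of_rel (s.trans (s.symm h) (s.rel_blockMin a)))

theorem blockMin_blockMin (a : α) : s.blockMin (s.blockMin a) = s.blockMin a :=
  s.blockMin_eq_blockMin_iff.2 (s.symm (s.rel_blockMin a))

theorem blockMin_ker {f : α → α} (hle : ∀ a, f a ≤ a) (hidem : ∀ a, f (f a) = f a) :
    (ker f).blockMin = f := by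
  funext a
  refine le_antisymm ((ker f).blockMin_le_of_rel (hidem a).symm) ?_
  calc f a = f ((ker f).blockMin a) := (ker f).rel_blockMin a
    _ ≤ (ker f).blockMin a := hle _

/-- Points are ordered by the minimum of their block first, and decreasingly within a block. -/
noncomputable def blockKey (a : α) : α ×ₗ αᵒᵈ :=
  toLex (s.blockMin a, OrderDual.toDual a)

theorem blockKey_injective : Function.Injective s.blockKey :=
  fun a b h => by simpa [blockKey] using congrArg (fun x => (ofLex x).2) h

theorem blockKey_le_blockKey_iff {a b : α} : s.blockKey a ≤ s.blockKey b ↔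
    s.blockMin a < s.blockMin b ∨ s.blockMin a = s.blockMin b ∧ b ≤ a := by
  simp [blockKey, Prod.Lex.le_iff]

theorem blockKey_lt_blockKey_iff {a b : α} : s.blockKey a < s.blockKey b ↔
    s.blockMin a < s.blockMin b ∨ s.blockMin a = s.blockMin b ∧ b < a := by
  simp [blockKey, Prod.Lex.lt_iff]

theorem blockMin_le_of_blockKey_le {a b : α} (h : s.blockKey a ≤ s.blockKey b) :
    s.blockMin a ≤ s.blockMin b := by
  rcases s.blockKey_le_blockKey_iff.1 h with h | ⟨h, -⟩
  exacts [h.le, h.le]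

end Setoid

variable {n : ℕ}

theorem avoids23d1_iff {π : Equiv.Perm (Fin n)} : Avoids23d1 π ↔
    ∀ (i j : Fin n) (h : i.1 + 1 < n), i.1 + 1 < j.1 → π i < π ⟨i.1 + 1, h⟩ → π i < π j := by
  simp only [Avoids23d1, not_exists, not_and]
  refine forall₂_congr fun i j => forall₂_congr fun h hij => ?_
  have hne : π j ≠ π i := π.injective.ne (Fin.ne_of_gt (by rw [Fin.lt_def]; omega))
  constructor
  · exact fun H hasc => lt_of_not_ge fun hle => H (lt_of_le_of_ne hle hne) hasc
  · exact fun H hlt hasc => (H hasc).not_gt hlt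

namespace Setoid

variable (s : Setoid (Fin n))

noncomputable def blockPerm : Equiv.Perm (Fin n) :=
  Tuple.sort s.blockKey

theorem strictMono_blockKey_blockPerm : StrictMono (s.blockKey ∘ s.blockPerm) :=
  (Tuple.monotone_sort _).strictMono_of_injective (s.blockKey_injective.comp (Equiv.injective _))

theorem eq_blockPerm_of_monotone {π : Equiv.Perm (Fin n)} (h : Monotone (s.blockKey ∘ π)) :
    π = s.blockPerm :=
  Equiv.coe_fn_injective (s.blockKey_injective.comp_left
    (Tuple.comp_sort_eq_comp_iff_monotone.2 h))

variable {s} in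
theorem avoids23d1_of_strictMono {π : Equiv.Perm (Fin n)} (hmono : StrictMono (s.blockKey ∘ π)) :
    Avoids23d1 π := by
  refine avoids23d1_iff.2 fun i j h hij hasc => ?_
  set i' : Fin n := ⟨i.1 + 1, h⟩
  have hii' : i < i' := by rw [Fin.lt_def]; simp [i']
  have hblock : s.blockMin (π i) < s.blockMin (π i') := by
    rcases s.blockKey_lt_blockKey_iff.1 (hmono hii') with hlt | ⟨-, hgt⟩
    exacts [hlt, absurd hasc hgt.not_gt]
  -- at an ascent, `π i` is the last entry of its block, which is the block's minimum
  have hmin : π i = s.blockMin (π i) := by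
    obtain ⟨q, hq⟩ := π.surjective (s.blockMin (π i))
    have hiq : i ≤ q := hmono.le_iff_le.1 <| s.blockKey_le_blockKey_iff.2 <|
      .inr ⟨by rw [hq, blockMin_blockMin], hq ▸ s.blockMin_le _⟩
    have hqi' : q < i' := hmono.lt_iff_lt.1 <| s.blockKey_lt_blockKey_iff.2 <|
      .inl (by rwa [hq, blockMin_blockMin])
    have hqi : q = i := by
      rw [Fin.lt_def] at hqi'
      rw [Fin.le_def] at hiq
      exact Fin.ext (by simp only [i'] at hqi'; omega)
    rw [← hq, hqi]
  have hi'j : i' < j := by rw [Fin.lt_def]; simpa [i'] using hij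
  calc π i = s.blockMin (π i) := hmin
    _ < s.blockMin (π i') := hblock
    _ ≤ s.blockMin (π j) := s.blockMin_le_of_blockKey_le (hmono hi'j).le
    _ ≤ π j := s.blockMin_le _

end Setoid

namespace Equiv.Perm

variable (π : Equiv.Perm (Fin n))

noncomputable def suffixMin (i : Fin n) : Fin n :=
  ((Ici i).image π).min' (nonempty_Ici.image π)

theorem suffixMin_le {i j : Fin n} (h : i ≤ j) : π.suffixMin i ≤ π j :=
  min'_le _ _ (mem_image_of_mem π (mem_Ici.2 h))

theorem exists_apply_eq_suffixMin (i : Fin n) : ∃ j, i ≤ j ∧ π j = π.suffixMin i := by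
  simpa [suffixMin] using min'_mem ((Ici i).image π) (nonempty_Ici.image π)

theorem monotone_suffixMin : Monotone π.suffixMin :=
  fun _ _ h => min'_subset _ (image_subset_image (Ici_subset_Ici.2 h))

theorem lt_suffixMin_iff {a i : Fin n} : a < π.suffixMin i ↔ ∀ j, i ≤ j → a < π j := by
  rw [suffixMin, lt_min'_iff]
  simp only [forall_mem_image, mem_Ici]

theorem suffixMin_symm_suffixMin (i : Fin n) :
    π.suffixMin (π.symm (π.suffixMin i)) = π.suffixMin i := by
  obtain ⟨j, hij, hj⟩ := π.exists_apply_eq_suffixMin i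
  rw [← hj, symm_apply_apply]
  exact le_antisymm (π.suffixMin_le le_rfl) (hj ▸ π.monotone_suffixMin hij)

theorem strictMono_toLex_suffixMin (hπ : Avoids23d1 π) :
    StrictMono fun i => toLex (π.suffixMin i, OrderDual.toDual (π i)) := by
  rcases n with _ | m
  · exact fun i => i.elim0
  refine Fin.strictMono_iff_lt_succ.2 fun i => Prod.Lex.toLex_lt_toLex.2 ?_
  rcases lt_or_gt_of_ne (π.injective.ne (Fin.castSucc_lt_succ (i := i)).ne) with hasc | hdesc
  · refine .inl (lt_of_le_of_lt (π.suffixMin_le le_rfl) (π.lt_suffixMin_iff.2 fun j hj => ?_))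
    rcases hj.eq_or_lt with rfl | hj
    · exact hasc
    · exact avoids23d1_iff.1 hπ i.castSucc j (by simp) (by simpa [Fin.lt_def] using hj) hasc
  · rcases (π.monotone_suffixMin (Fin.castSucc_lt_succ (i := i)).le).lt_or_eq with hlt | heq
    exacts [.inl hlt, .inr ⟨heq, hdesc⟩]

end Equiv.Perm

noncomputable def Equiv.Perm.blockSetoid (π : Equiv.Perm (Fin n)) : Setoid (Fin n) :=
  Setoid.ker (π.suffixMin ∘ π.symm)

namespace Setoid

variable (s : Setoid (Fin n))

theorem suffixMin_eq_blockMin {π : Equiv.Perm (Fin n)} (hmono : StrictMono (s.blockKey ∘ π))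
    (i : Fin n) : π.suffixMin i = s.blockMin (π i) := by
  refine le_antisymm ?_ ?_
  · obtain ⟨q, hq⟩ := π.surjective (s.blockMin (π i))
    have hiq : i ≤ q := hmono.le_iff_le.1 <| s.blockKey_le_blockKey_iff.2 <|
      .inr ⟨by rw [hq, blockMin_blockMin], hq ▸ s.blockMin_le _⟩
    exact hq ▸ π.suffixMin_le hiq
  · obtain ⟨j, hij, hj⟩ := π.exists_apply_eq_suffixMin i
    calc s.blockMin (π i) ≤ s.blockMin (π j) := s.blockMin_le_of_blockKey_le (hmono.monotone hij)
      _ ≤ π.suffixMin i := hj ▸ s.blockMin_le _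

theorem blockSetoid_blockPerm : s.blockPerm.blockSetoid = s := by
  ext a b
  rw [Equiv.Perm.blockSetoid, ker_def, Function.comp_apply, Function.comp_apply,
    s.suffixMin_eq_blockMin s.strictMono_blockKey_blockPerm,
    s.suffixMin_eq_blockMin s.strictMono_blockKey_blockPerm, Equiv.apply_symm_apply,
    Equiv.apply_symm_apply, blockMin_eq_blockMin_iff]

theorem blockMin_blockSetoid (π : Equiv.Perm (Fin n)) :
    π.blockSetoid.blockMin = π.suffixMin ∘ π.symm :=
  blockMin_ker (fun a => by simpa using π.suffixMin_le (le_refl (π.symm a)))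
    (fun a => by simp [π.suffixMin_symm_suffixMin])

theorem blockPerm_blockSetoid {π : Equiv.Perm (Fin n)} (hπ : Avoids23d1 π) :
    π.blockSetoid.blockPerm = π := by
  refine (π.blockSetoid.eq_blockPerm_of_monotone ?_).symm
  convert (π.strictMono_toLex_suffixMin hπ).monotone using 2 with i
  simp [blockKey, blockMin_blockSetoid]

noncomputable def blockPermEquiv : Setoid (Fin n) ≃ {π : Equiv.Perm (Fin n) // Avoids23d1 π} where
  toFun s := ⟨s.blockPerm, avoids23d1_of_strictMono s.strictMono_blockKey_blockPerm⟩
  invFun π := π.1.blockSetoid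
  left_inv := blockSetoid_blockPerm
  right_inv π := Subtype.ext (blockPerm_blockSetoid π.2)

theorem blockPerm_zero_eq_iff [NeZero n] {κ : Fin n} :
    s.blockPerm 0 = κ ↔ s 0 κ ∧ ∀ x, κ < x → ¬ s 0 x := by
  set p := s.blockPerm 0
  have hmin (b : Fin n) : s.blockKey p ≤ s.blockKey b := by
    simpa using s.strictMono_blockKey_blockPerm.monotone (Fin.zero_le (s.blockPerm.symm b))
  have hzero : s.blockMin 0 = 0 := (s.blockMin_le 0).eq_zero
  have hp : s 0 p := by
    have hp0 : s.blockMin p ≤ 0 := hzero ▸ s.blockMin_le_of_blockKey_le (hmin 0)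
    exact s.symm (s.blockMin_eq_blockMin_iff.1 (hp0.eq_zero.trans hzero.symm))
  have hmax {x : Fin n} (hx : s 0 x) : x ≤ p := by
    have hpx : s.blockMin p = s.blockMin x := s.blockMin_eq_blockMin_iff.2 (s.trans (s.symm hp) hx)
    rcases s.blockKey_le_blockKey_iff.1 (hmin x) with h | ⟨-, h⟩
    exacts [absurd hpx h.ne, h]
  constructor
  · rintro rfl
    exact ⟨hp, fun x hx hrel => (hmax hrel).not_gt hx⟩
  · rintro ⟨hκ, hgt⟩
    exact le_antisymm (le_of_not_gt fun h => hgt p h hp) (hmax hκ)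

end Setoid

section Counting

variable [NeZero n]

noncomputable def avoids23d1ApplyZeroEquiv (κ : Fin n) :
    {s : Setoid (Fin n) // s 0 κ ∧ ∀ x, κ < x → ¬ s 0 x} ≃
      {π : Equiv.Perm (Fin n) // Avoids23d1 π ∧ π 0 = κ} :=
  (Setoid.blockPermEquiv.subtypeEquiv fun s => s.blockPerm_zero_eq_iff.symm).trans
    (Equiv.subtypeSubtypeEquivSubtypeInter _ _)

theorem card_avoids23d1_apply_zero_eq_zero :
    Nat.card {π : Equiv.Perm (Fin n) // Avoids23d1 π ∧ π 0 = 0} = bell (n - 1) := by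
  have hcard := Setoid.card_isolated (0 : Fin n)
  rw [Fintype.card_fin] at hcard
  rw [← Nat.card_congr (avoids23d1ApplyZeroEquiv 0), ← hcard]
  refine Nat.card_congr (Equiv.subtypeEquivRight fun s => ⟨fun h x hx => ?_, fun h => ?_⟩)
  · exact by_contra fun hx0 => h.2 x (Fin.pos_iff_ne_zero.2 hx0) hx
  · exact ⟨s.refl 0, fun x hx hrel => hx.ne' (h x hrel)⟩

theorem card_avoids23d1_apply_zero_eq {κ : Fin n} (hκ : κ ≠ 0) :
    (Nat.card {π : Equiv.Perm (Fin n) // Avoids23d1 π ∧ π 0 = κ} : ℤ) =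
      ∑ i ∈ range (n - 1 - κ + 1), (-1 : ℤ) ^ i * ((n - 1 - κ).choose i) * bell (n - 1 - i) := by
  have hcard := Setoid.card_rel_forall_not_rel hκ.symm (U := Ioi κ) (by simp) (by simp)
  rw [Fintype.card_fin, Fin.card_Ioi] at hcard
  rw [← Nat.card_congr (avoids23d1ApplyZeroEquiv κ), ← hcard]
  simp only [mem_Ioi]

end Counting

theorem bell_distribution (n : ℕ) (hn : 2 ≤ n) :
    Nat.card {π : Equiv.Perm (Fin n) // Avoids23d1 π ∧ π ⟨0, by omega⟩ = ⟨0, by omega⟩} = bell (n - 1) ∧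
    ∀ k : ℕ, (hk1 : 2 ≤ k) → (hk2 : k ≤ n) →
      (Nat.card {π : Equiv.Perm (Fin n) // Avoids23d1 π ∧ π ⟨0, by omega⟩ = ⟨k - 1, by omega⟩} : ℤ) =
        ∑ i ∈ Finset.range (n - k + 1), (-1 : ℤ) ^ i * (((n - k)).choose i) * (bell (n - 1 - i) : ℤ) := by
  have : NeZero n := ⟨by omega⟩
  have h0 : (⟨0, by omega⟩ : Fin n) = 0 := rfl
  simp only [h0]
  refine ⟨card_avoids23d1_apply_zero_eq_zero, fun k hk1 hk2 => ?_⟩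
  have hκ : (⟨k - 1, by omega⟩ : Fin n) ≠ 0 := by simp [Fin.ext_iff]; omega
  have hnk : n - 1 - ((⟨k - 1, by omega⟩ : Fin n) : ℕ) = n - k := by simp only; omega
  rw [card_avoids23d1_apply_zero_eq hκ, hnk]
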